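/- Let Q be a finite set of vectors in R^n and i < j indices. Define the (i,j)-shift Q_{i,j} by replacing each v ∈ Q with v_{i,j} (the vector obtained by swapping coordinates i and j when v_i < v_j, and v itself otherwise) unless v_{i,j} already lies in Q, in which case v is retained. Then min{⟨v,w⟩ : v,w ∈ Q} ≤ min{⟨v',w'⟩ : v',w' ∈ Q_{i,j}}. -/

import Mathlib

/-- scalar product -/
def dot {n : ℕ} (v w : Fin n → ℝ) : ℝ := ∑ m, v m * w m

/-- the `(i,j)`-shift of a single vector: swap coordinates `i` and `j`
whenever `v i < v j`. -/
noncomputable def shiftVec {n : ℕ} (i j : Fin n) (v : Fin n → ℝ) : Fin n → ℝ :=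
  if v i < v j then v ∘ (Equiv.swap i j) else v

/-- the `(i,j)`-shift of a family of vectors. -/
def shiftFam {n : ℕ} (i j : Fin n) (Q : Set (Fin n → ℝ)) : Set (Fin n → ℝ) :=
  (shiftVec i j '' Q) ∪ {v ∈ Q | shiftVec i j v ∈ Q}

/-!
Swapping coordinates `i, j` of one factor changes a scalar product by
`-(v i - v j) * (w i - w j)`, and swapping them in both factors changes nothing.
Hence shifting a vector never decreases its product with a vector that is already
ordered at `i, j`. The only pair of `Q_{i,j}` not handled by this is a shifted `v`
against a retained `w` that is itself unordered: then `⟨v_{i,j}, w⟩ = ⟨v, w_{i,j}⟩`,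
and `w_{i,j} ∈ Q` because `w` was retained.
-/

open Matrix

section DotProduct

variable {ι R : Type*} [DecidableEq ι]

theorem comp_swap_sub_self [AddGroup R] (i j : ι) (w : ι → R) :
    w ∘ Equiv.swap i j - w = Pi.single i (w j - w i) + Pi.single j (w i - w j) := by
  ext k
  rcases eq_or_ne k i with rfl | hki
  · rcases eq_or_ne k j with rfl | hkj <;> simp [*]
  · rcases eq_or_ne k j with rfl | hkj
    · simp [hki]
    · simp [Equiv.swap_apply_of_ne_of_ne, *]

variable [Fintype ι]

theorem dotProduct_comp_swap [CommRing R] (i j : ι) (v w : ι → R) :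
    v ⬝ᵥ (w ∘ Equiv.swap i j) = v ⬝ᵥ w - (v i - v j) * (w i - w j) := by
  have h := congrArg (v ⬝ᵥ ·) (comp_swap_sub_self i j w)
  simp only [dotProduct_sub, dotProduct_add, dotProduct_single] at h
  linear_combination h

theorem dotProduct_le_dotProduct_comp_swap [CommRing R] [PartialOrder R] [IsOrderedRing R]
    {i j : ι} {v w : ι → R} (h : (v i - v j) * (w i - w j) ≤ 0) :
    v ⬝ᵥ w ≤ v ⬝ᵥ (w ∘ Equiv.swap i j) := by
  rwa [dotProduct_comp_swap, le_sub_self_iff]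

end DotProduct

section Shift

variable {n : ℕ} {i j : Fin n}

theorem dot_eq_dotProduct (v w : Fin n → ℝ) : dot v w = v ⬝ᵥ w := rfl

theorem dot_comm (v w : Fin n → ℝ) : dot v w = dot w v := dotProduct_comm v w

theorem comp_swap_dot (v w : Fin n → ℝ) :
    dot (v ∘ Equiv.swap i j) w = dot v (w ∘ Equiv.swap i j) := by
  simp only [dot_eq_dotProduct, ← comp_equiv_symm_dotProduct, Equiv.symm_swap]

theorem dot_le_comp_swap_dot {v w : Fin n → ℝ} (hv : v i < v j) (hw : w j ≤ w i) :
    dot v w ≤ dot (v ∘ Equiv.swap i j) w := by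
  rw [comp_swap_dot]
  exact dotProduct_le_dotProduct_comp_swap
    (mul_nonpos_of_nonpos_of_nonneg (sub_nonpos.2 hv.le) (sub_nonneg.2 hw))

theorem dot_le_dot_shiftVec_shiftVec (v w : Fin n → ℝ) :
    dot v w ≤ dot (shiftVec i j v) (shiftVec i j w) := by
  unfold shiftVec
  split_ifs with hv hw hw
  · exact (comp_equiv_dotProduct_comp_equiv v w _).ge
  · exact dot_le_comp_swap_dot hv (not_lt.1 hw)
  · rw [dot_comm, dot_comm v]
    exact dot_le_comp_swap_dot hw (not_lt.1 hv)
  · exact le_rfl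

theorem exists_dot_le_dot_shiftVec_left {Q : Set (Fin n → ℝ)} {v w : Fin n → ℝ} (hv : v ∈ Q)
    (hw : w ∈ Q) (hsw : shiftVec i j w ∈ Q) :
    ∃ a ∈ Q, ∃ b ∈ Q, dot a b ≤ dot (shiftVec i j v) w := by
  by_cases hvij : v i < v j
  · rw [shiftVec, if_pos hvij]
    by_cases hwij : w i < w j
    · exact ⟨v, hv, shiftVec i j w, hsw, by rw [comp_swap_dot, shiftVec, if_pos hwij]⟩
    · exact ⟨v, hv, w, hw, dot_le_comp_swap_dot hvij (not_lt.1 hwij)⟩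
  · exact ⟨v, hv, w, hw, by rw [shiftVec, if_neg hvij]⟩

end Shift

theorem stmt_7_general (n : ℕ) (i j : Fin n)
    (Q : Set (Fin n → ℝ)) :
    ∀ v' ∈ shiftFam i j Q, ∀ w' ∈ shiftFam i j Q,
      ∃ v ∈ Q, ∃ w ∈ Q, dot v w ≤ dot v' w' := by
  rintro v' (⟨v, hv, rfl⟩ | ⟨hv, hsv⟩) w' (⟨w, hw, rfl⟩ | ⟨hw, hsw⟩)
  · exact ⟨v, hv, w, hw, dot_le_dot_shiftVec_shiftVec v w⟩
  · exact exists_dot_le_dot_shiftVec_left hv hw hsw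
  · obtain ⟨a, ha, b, hb, hab⟩ := exists_dot_le_dot_shiftVec_left hw hv hsv
    exact ⟨b, hb, a, ha, by rwa [dot_comm, dot_comm v']⟩
  · exact ⟨v', hv, w', hw, le_rfl⟩

theorem stmt_7 (n : ℕ) (i j : Fin n) (hij : i < j)
    (Q : Set (Fin n → ℝ)) (hQ : Q.Finite) :
    ∀ v' ∈ shiftFam i j Q, ∀ w' ∈ shiftFam i j Q,
      ∃ v ∈ Q, ∃ w ∈ Q, dot v w ≤ dot v' w' :=
  stmt_7_general n i j Q
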